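/- Let A and B be unital associative algebras, fix c ∈ A and d ∈ B, and let φ: A → B be a linear map such that φ(a)φ(b) = d whenever ab = c. Then for every x ∈ A with xc = 0, one has φ(x)φ(c) = 0; and for every x ∈ A with cx = 0, one has φ(c)φ(x) = 0. -/

import Mathlib

def PreservesProductsAt {A B F : Type*} [Mul A] [Mul B] [FunLike F A B] (φ : F) (c : A) (d : B) :
    Prop :=
  ∀ a b : A, a * b = c → φ a * φ b = d

namespace PreservesProductsAt

variable {A B F : Type*} [NonAssocSemiring A] [NonUnitalNonAssocSemiring B] [IsLeftCancelAdd B]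
  [FunLike F A B] [AddMonoidHomClass F A B] {φ : F} {c : A} {d : B}

/-- Since `(1 + x) * c = 1 * c = c`, the hypothesis applies to both factorizations of `c`, and
cancelling `φ 1 * φ c` leaves `φ x * φ c = 0`. -/
theorem map_mul_map_eq_zero_of_mul_eq_zero (hφ : PreservesProductsAt φ c d) {x : A}
    (hx : x * c = 0) : φ x * φ c = 0 := by
  have h_one : φ 1 * φ c = d := hφ 1 c (one_mul c)
  have h_one_add : φ (1 + x) * φ c = d := hφ (1 + x) c (by rw [add_mul, one_mul, hx, add_zero])
  rw [map_add, add_mul, h_one] at h_one_add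
  exact add_eq_left.mp h_one_add

theorem map_mul_map_eq_zero_of_mul_eq_zero' (hφ : PreservesProductsAt φ c d) {x : A}
    (hx : c * x = 0) : φ c * φ x = 0 := by
  have h_one : φ c * φ 1 = d := hφ c 1 (mul_one c)
  have h_one_add : φ c * φ (1 + x) = d := hφ c (1 + x) (by rw [mul_add, mul_one, hx, add_zero])
  rw [map_add, mul_add, h_one] at h_one_add
  exact add_eq_left.mp h_one_add

end PreservesProductsAt

/-- If a linear map `φ` preserves products at `(c, d)`, then `x * c = 0`
implies `φ x * φ c = 0` and `c * x = 0` implies `φ c * φ x = 0`. -/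
theorem stmt19 {A B : Type*} [Ring A] [Algebra ℂ A] [Ring B] [Algebra ℂ B]
    (c : A) (d : B) (φ : A →ₗ[ℂ] B)
    (h : ∀ a b : A, a * b = c → φ a * φ b = d) :
    (∀ x : A, x * c = 0 → φ x * φ c = 0) ∧ (∀ x : A, c * x = 0 → φ c * φ x = 0) :=
  ⟨fun _ hx => PreservesProductsAt.map_mul_map_eq_zero_of_mul_eq_zero h hx,
    fun _ hx => PreservesProductsAt.map_mul_map_eq_zero_of_mul_eq_zero' h hx⟩
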